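/- Let f and g be functions on [0,1]^d of bounded HK0-variation. Then for any a,b ∈ [0,1]^d with a ≤ b (coordinatewise): V_HK0(f+g;[0,b]) − V_HK0(f+g;[0,a]) ≤ V_HK0(f;[0,b]) + V_HK0(g;[0,b]) − V_HK0(f;[0,a]) − V_HK0(g;[0,a]). -/

import Mathlib

open MeasureTheory Finset

noncomputable section

/-- The quasi-volume `Δ` of `f` over the box `[a,b]` in the coordinates of `S`;
the coordinates outside `S` are fixed according to the anchor point `p`. -/
def quasiVol {d : ℕ} (f : (Fin d → ℝ) → ℝ) (S : Finset (Fin d)) (p a b : Fin d → ℝ) : ℝ :=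
  ∑ T ∈ S.powerset, (-1 : ℝ) ^ T.card *
    f (fun i => if i ∈ S then (if i ∈ T then a i else b i) else p i)

/-- A grid (a partition generated by one-dimensional partitions of the sides) of the
box `[lo, hi]` in the coordinates of `S`. -/
structure Grid (d : ℕ) (S : Finset (Fin d)) (lo hi : Fin d → ℝ) where
  m : Fin d → ℕ
  t : Fin d → ℕ → ℝ
  mono : ∀ i ∈ S, ∀ j k : ℕ, j ≤ k → k ≤ m i → t i j ≤ t i k
  first : ∀ i ∈ S, t i 0 = lo i
  last : ∀ i ∈ S, t i (m i) = hi i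

/-- The sum, over all cells of a grid, of the absolute value of the quasi-volume of the cell. -/
def gridSum {d : ℕ} (f : (Fin d → ℝ) → ℝ) (S : Finset (Fin d)) (p lo hi : Fin d → ℝ)
    (G : Grid d S lo hi) : ℝ :=
  ∑ k ∈ Fintype.piFinset (fun i => Finset.range (if i ∈ S then G.m i else 1)),
    |quasiVol f S p (fun i => G.t i (k i)) (fun i => G.t i (k i + 1))|

/-- The variation in the sense of Vitali of `f` on the face of the box `[lo, hi]` with active
coordinates `S`, the remaining coordinates being fixed according to the anchor `p`:
the supremum of `gridSum` over all grids. -/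
def vitaliVar {d : ℕ} (f : (Fin d → ℝ) → ℝ) (S : Finset (Fin d)) (p lo hi : Fin d → ℝ) : ℝ :=
  sSup (Set.range (gridSum f S p lo hi))

/-- The Vitali variation on the face `(S, p)` of `[lo, hi]` is bounded (finite). -/
def BddVitali {d : ℕ} (f : (Fin d → ℝ) → ℝ) (S : Finset (Fin d)) (p lo hi : Fin d → ℝ) : Prop :=
  BddAbove (Set.range (gridSum f S p lo hi))

/-- Hardy–Krause-type variation of `f` on the box `[lo, hi]` with anchor `p`: the sum, over all
nonempty sets `S` of coordinates, of the Vitali variation of the restriction of `f` to the face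
of `[lo, hi]` whose coordinates outside `S` are fixed according to `p`. -/
def hkVarOn {d : ℕ} (f : (Fin d → ℝ) → ℝ) (p lo hi : Fin d → ℝ) : ℝ :=
  ∑ S ∈ (Finset.univ : Finset (Fin d)).powerset.erase ∅, vitaliVar f S p lo hi

/-- All the Vitali variations occurring in `hkVarOn` are bounded. -/
def BddHKVarOn {d : ℕ} (f : (Fin d → ℝ) → ℝ) (p lo hi : Fin d → ℝ) : Prop :=
  ∀ S ∈ (Finset.univ : Finset (Fin d)).powerset.erase ∅, BddVitali f S p lo hi

/-- The Hardy–Krause variation of `f` on `[0,1]^d`, anchored at `1`. -/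
def hkVar {d : ℕ} (f : (Fin d → ℝ) → ℝ) : ℝ := hkVarOn f 1 0 1

/-- `f` has bounded Hardy–Krause variation (anchored at `1`). -/
def BddHKVar {d : ℕ} (f : (Fin d → ℝ) → ℝ) : Prop := BddHKVarOn f 1 0 1

/-- The Hardy–Krause variation of `f` on the box `[0, a]`, anchored at `0`. -/
def hkVar0On {d : ℕ} (f : (Fin d → ℝ) → ℝ) (a : Fin d → ℝ) : ℝ := hkVarOn f 0 0 a

/-- The Hardy–Krause variation of `f` on `[0,1]^d`, anchored at `0`. -/
def hkVar0 {d : ℕ} (f : (Fin d → ℝ) → ℝ) : ℝ := hkVarOn f 0 0 1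

/-- `f` has bounded Hardy–Krause variation anchored at `0`. -/
def BddHKVar0 {d : ℕ} (f : (Fin d → ℝ) → ℝ) : Prop := BddHKVarOn f 0 0 1

/-- `f` is completely monotone: every quasi-volume of an axis-parallel box contained in a face
of `[0,1]^d` (coordinates outside the active set `S` being fixed at `0` or `1`) is nonnegative. -/
def CompletelyMonotone {d : ℕ} (f : (Fin d → ℝ) → ℝ) : Prop :=
  ∀ S : Finset (Fin d), S.Nonempty → ∀ p : Fin d → ℝ, (∀ i ∉ S, p i = 0 ∨ p i = 1) →
    ∀ a b : Fin d → ℝ, a ∈ Set.Icc (0 : Fin d → ℝ) 1 → b ∈ Set.Icc (0 : Fin d → ℝ) 1 →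
      a ≤ b → 0 ≤ quasiVol f S p a b

/-- `f` is coordinatewise right-continuous at every point of `[0,1]^d`. -/
def RightCts {d : ℕ} (f : (Fin d → ℝ) → ℝ) : Prop :=
  ∀ x ∈ Set.Icc (0 : Fin d → ℝ) 1, ∀ i : Fin d,
    Filter.Tendsto (fun y : ℝ => f (Function.update x i y))
      (nhdsWithin (x i) (Set.Icc (x i) 1)) (nhds (f x))

/-- The star-discrepancy of the points `x 1, …, x N` with respect to the measure `μ`. -/
def starDisc {d : ℕ} (N : ℕ) (x : Fin N → Fin d → ℝ) (μ : Measure (Fin d → ℝ)) : ℝ :=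
  ⨆ a : Set.Icc (0 : Fin d → ℝ) 1,
    |(∑ n : Fin N, Set.indicator (Set.Icc 0 (a : Fin d → ℝ)) (fun _ => (1 : ℝ)) (x n)) / N
      - (μ (Set.Icc 0 (a : Fin d → ℝ))).toReal|

/-!
Fix a face `S`. Given grids `G` of `[0, b]` and `Gf`, `Gg` of `[0, a]`, there is a grid `K` of
`[0, b]` refining `G` whose cells inside `[0, a]` form a grid `Ki` refining `Gf` and `Gg`;
refining does not decrease grid sums because the quasi-volume is additive over subdivisions.
The sum over `K` is the sum over `Ki` plus the sum over the cells outside `[0, a]`, where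
`|Δ(f + g)| ≤ |Δ f| + |Δ g|`. Hence
`Σ_G (f + g) + Σ_Gf f + Σ_Gg g ≤ V_b f + V_b g + V_a (f + g)`, and taking suprema over `G`, `Gf`,
`Gg` gives the inequality on each face; summing over the faces gives the theorem.
-/

open Function

variable {d : ℕ}

section IndexArithmetic

variable {ι M : Type*} [Fintype ι] [DecidableEq ι] [AddCommMonoid M]

lemma Nat.mul_add_div_of_lt {κ b r : ℕ} (hr : r < b) : (κ * b + r) / b = κ :=
  Nat.div_eq_of_lt_le (Nat.le_add_right _ _) (by rw [add_mul, one_mul]; omega)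

lemma Nat.exists_eq_mul_add_of_le_mul {a b j : ℕ} (ha : 0 < a) (hj : j ≤ a * b) :
    ∃ κ < a, ∃ r ≤ b, j = κ * b + r := by
  rcases hj.lt_or_eq with hj | rfl
  · have hb : 0 < b := Nat.pos_of_mul_pos_left (Nat.zero_lt_of_lt hj)
    exact ⟨j / b, Nat.div_lt_of_lt_mul (by rwa [mul_comm]), j % b, (Nat.mod_lt _ hb).le,
      (Nat.div_add_mod' j b).symm⟩
  · refine ⟨a - 1, by omega, b, le_rfl, ?_⟩
    rw [Nat.sub_one_mul, Nat.sub_add_cancel (Nat.le_mul_of_pos_left b ha)]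

lemma sum_piFinset_eq_sum_sum_update {α : Type*} [DecidableEq α] {r : ι → Finset α} (i : ι)
    (F : (ι → α) → M) :
    ∑ k ∈ Fintype.piFinset r, F k = ∑ j ∈ r i, ∑ k ∈ Fintype.piFinset (update r i {j}), F k := by
  rw [← sum_fiberwise_of_maps_to (g := fun k => k i) fun k hk => Fintype.mem_piFinset.1 hk i]
  refine sum_congr rfl fun j hj => ?_
  rw [Fintype.piFinset_update_singleton_eq_filter_piFinset_eq _ _ hj]

lemma sum_piFinset_range_mul (a b : ι → ℕ) (F : (ι → ℕ) → M) :
    ∑ J ∈ Fintype.piFinset (fun i => range (a i * b i)), F J =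
      ∑ κ ∈ Fintype.piFinset (fun i => range (a i)),
        ∑ r ∈ Fintype.piFinset (fun i => range (b i)), F (fun i => κ i * b i + r i) := by
  rw [← sum_product']
  refine sum_nbij' (fun J => (fun i => J i / b i, fun i => J i % b i))
    (fun q i => q.1 i * b i + q.2 i) ?_ ?_ ?_ ?_ ?_
  · intro J hJ
    simp only [mem_product, Fintype.mem_piFinset, mem_range] at hJ ⊢
    have hb : ∀ i, 0 < b i := fun i => Nat.pos_of_mul_pos_left (Nat.zero_lt_of_lt (hJ i))
    exact ⟨fun i => Nat.div_lt_of_lt_mul (by rw [mul_comm]; exact hJ i),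
      fun i => Nat.mod_lt _ (hb i)⟩
  · intro q hq
    simp only [mem_product, Fintype.mem_piFinset, mem_range] at hq ⊢
    intro i
    nlinarith [hq.1 i, hq.2 i]
  · intro J _
    funext i
    exact Nat.div_add_mod' (J i) (b i)
  · intro q hq
    simp only [mem_product, Fintype.mem_piFinset, mem_range] at hq
    ext i
    exacts [Nat.mul_add_div_of_lt (hq.2 i), Nat.mul_add_mod_of_lt (hq.2 i)]
  · intro J _
    simp only [Nat.div_add_mod']

end IndexArithmetic

section QuasiVolume

variable {f g : (Fin d → ℝ) → ℝ} {S : Finset (Fin d)} {p a b : Fin d → ℝ}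

lemma quasiVol_congr {a' b' : Fin d → ℝ} (ha : ∀ i ∈ S, a i = a' i) (hb : ∀ i ∈ S, b i = b' i) :
    quasiVol f S p a b = quasiVol f S p a' b' := by
  unfold quasiVol
  refine sum_congr rfl fun T _ => ?_
  congr 2
  funext i
  by_cases hi : i ∈ S <;> simp [hi, ha i, hb i]

lemma quasiVol_add : quasiVol (f + g) S p a b = quasiVol f S p a b + quasiVol g S p a b := by
  simp only [quasiVol, ← sum_add_distrib, Pi.add_apply, mul_add]

lemma quasiVol_empty : quasiVol f ∅ p a b = f p := by
  simp [quasiVol]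

lemma quasiVol_insert {i : Fin d} (hi : i ∉ S) :
    quasiVol f (insert i S) p a b =
      quasiVol f S (update p i (b i)) a b - quasiVol f S (update p i (a i)) a b := by
  unfold quasiVol
  rw [sum_powerset_insert hi, sub_eq_add_neg, ← sum_neg_distrib]
  congr 1 <;> refine sum_congr rfl fun T hT => ?_
  · have hiT : i ∉ T := fun h => hi (mem_powerset.1 hT h)
    congr 2
    funext j
    by_cases hj : j = i
    · subst hj; simp [hi, hiT]
    · simp [hj]
  · have hiT : i ∉ T := fun h => hi (mem_powerset.1 hT h)
    rw [card_insert_of_notMem hiT, pow_succ, mul_neg_one, neg_mul, neg_inj]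
    congr 2
    funext j
    by_cases hj : j = i
    · subst hj; simp [hi]
    · simp [hj]

end QuasiVolume

section Telescoping

variable {α G : Type*} [LinearOrder α] [AddCommGroup G]

def projCell (x : ℕ → α) (κ : ℕ) (y : α) : α := max (x κ) (min y (x (κ + 1)))

lemma projCell_mono (x : ℕ → α) (κ : ℕ) : Monotone (projCell x κ) :=
  fun _ _ h => max_le_max le_rfl (min_le_min_right _ h)

lemma projCell_of_le {x : ℕ → α} {κ : ℕ} {y : α} (hx : x κ ≤ x (κ + 1)) (hy : y ≤ x κ) :
    projCell x κ y = x κ := by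
  rw [projCell, min_eq_left (hy.trans hx), max_eq_left hy]

lemma projCell_of_ge {x : ℕ → α} {κ : ℕ} {y : α} (hx : x κ ≤ x (κ + 1)) (hy : x (κ + 1) ≤ y) :
    projCell x κ y = x (κ + 1) := by
  rw [projCell, min_eq_right hy, max_eq_right hx]

lemma projCell_of_mem {x : ℕ → α} {κ : ℕ} {y : α} (hy : y ∈ Set.Icc (x κ) (x (κ + 1))) :
    projCell x κ y = y := by
  rw [projCell, min_eq_left hy.2, max_eq_right hy.1]

lemma sum_range_sub_projCell_eq {x : ℕ → α} (hx : Monotone x) (g : α → G) {n : ℕ} {w : α}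
    (h0 : x 0 ≤ w) (hn : w ≤ x n) :
    ∑ j ∈ range n, (g (projCell x j w) - g (x j)) = g w - g (x 0) := by
  induction n generalizing w with
  | zero => simp [le_antisymm hn h0]
  | succ n ih =>
    rw [sum_range_succ]
    rcases le_total w (x n) with hw | hw
    · rw [ih h0 hw, projCell_of_le (hx n.le_succ) hw]
      abel
    · have hfull : ∑ j ∈ range n, (g (projCell x j w) - g (x j)) = g (x n) - g (x 0) := by
        rw [← ih (hx n.zero_le) le_rfl]
        refine sum_congr rfl fun j hj => ?_
        have hjn : x (j + 1) ≤ x n := hx (mem_range.1 hj)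
        rw [projCell_of_ge (hx j.le_succ) (hjn.trans hw), projCell_of_ge (hx j.le_succ) hjn]
      rw [hfull, projCell_of_mem ⟨hw, hn⟩]
      abel

lemma sum_range_sub_projCell_sub_projCell {x : ℕ → α} (hx : Monotone x) (g : α → G) {n : ℕ}
    {u v : α} (hu : u ∈ Set.Icc (x 0) (x n)) (hv : v ∈ Set.Icc (x 0) (x n)) :
    ∑ j ∈ range n, (g (projCell x j v) - g (projCell x j u)) = g v - g u := by
  have := congr_arg₂ (· - ·) (sum_range_sub_projCell_eq hx g hv.1 hv.2)
    (sum_range_sub_projCell_eq hx g hu.1 hu.2)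
  simpa only [← sum_sub_distrib, sub_sub_sub_cancel_right] using this

end Telescoping

section BlockSum

variable {f : (Fin d → ℝ) → ℝ} {S : Finset (Fin d)}

def cells (S : Finset (Fin d)) (m : Fin d → ℕ) : Finset (Fin d → ℕ) :=
  Fintype.piFinset fun i => range (if i ∈ S then m i else 1)

lemma cells_eq_piFinset (S : Finset (Fin d)) (m : Fin d → ℕ) :
    cells S m = Fintype.piFinset fun i => if i ∈ S then range (m i) else {0} := by
  unfold cells
  congr 1
  funext i
  split_ifs <;> simp

lemma lt_of_mem_cells {m : Fin d → ℕ} {k : Fin d → ℕ} (hk : k ∈ cells S m) {i : Fin d}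
    (hi : i ∈ S) : k i < m i := by
  simpa [hi] using Fintype.mem_piFinset.1 hk i

/-- The hypothesis `h` says that the intervals `[α i k, β i k]`, `k < n i`, subdivide
`[u i, v i]`; the quasi-volume is then additive over the product subdivision. -/
lemma sum_quasiVol_eq_of_telescoping (S : Finset (Fin d)) (n : Fin d → ℕ) (α β : Fin d → ℕ → ℝ)
    (u v : Fin d → ℝ) (h : ∀ i ∈ S, ∀ g : ℝ → ℝ,
      ∑ k ∈ range (n i), (g (β i k) - g (α i k)) = g (v i) - g (u i)) (c : Fin d → ℕ)
    (p : Fin d → ℝ) :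
    ∑ κ ∈ Fintype.piFinset (fun i => if i ∈ S then range (n i) else {c i}),
        quasiVol f S p (fun i => α i (κ i)) (fun i => β i (κ i)) = quasiVol f S p u v := by
  induction S using Finset.induction_on generalizing c p with
  | empty => simp [Fintype.piFinset_singleton, quasiVol_empty]
  | @insert i S hi ih =>
    have hS : ∀ i' ∈ S, ∀ g : ℝ → ℝ,
        ∑ k ∈ range (n i'), (g (β i' k) - g (α i' k)) = g (v i') - g (u i') :=
      fun i' hi' => h i' (mem_insert_of_mem hi')
    rw [sum_piFinset_eq_sum_sum_update i, if_pos (mem_insert_self i S)]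
    have hfiber : ∀ j, update (fun i' => if i' ∈ insert i S then range (n i') else {c i'}) i {j} =
        fun i' => if i' ∈ S then range (n i') else {update c i j i'} := by
      intro j
      funext i'
      by_cases h' : i' = i
      · subst h'; simp [hi]
      · simp [h']
    have hcell : ∀ j, ∀ k ∈ Fintype.piFinset
        (fun i' => if i' ∈ S then range (n i') else {update c i j i'}),
        quasiVol f (insert i S) p (fun i' => α i' (k i')) (fun i' => β i' (k i')) =
          quasiVol f S (update p i (β i j)) (fun i' => α i' (k i')) (fun i' => β i' (k i')) -
          quasiVol f S (update p i (α i j)) (fun i' => α i' (k i')) (fun i' => β i' (k i')) := by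
      intro j k hk
      have hki : k i = j := by simpa [hi] using Fintype.mem_piFinset.1 hk i
      rw [quasiVol_insert hi, hki]
    simp_rw [hfiber]
    rw [sum_congr rfl fun j _ => sum_congr rfl (hcell j)]
    simp only [sum_sub_distrib, ih hS]
    rw [← sum_sub_distrib, h i (mem_insert_self i S) fun w => quasiVol f S (update p i w) u v,
      quasiVol_insert hi]

lemma sum_cells_quasiVol_eq_of_telescoping (n : Fin d → ℕ) (α β : Fin d → ℕ → ℝ)
    (u v : Fin d → ℝ) (h : ∀ i ∈ S, ∀ g : ℝ → ℝ,
      ∑ k ∈ range (n i), (g (β i k) - g (α i k)) = g (v i) - g (u i)) (p : Fin d → ℝ) :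
    ∑ κ ∈ cells S n, quasiVol f S p (fun i => α i (κ i)) (fun i => β i (κ i)) =
      quasiVol f S p u v := by
  rw [cells_eq_piFinset]
  exact sum_quasiVol_eq_of_telescoping S n α β u v h 0 p

end BlockSum

section GridSums

variable {f g : (Fin d → ℝ) → ℝ} {S : Finset (Fin d)} {p lo hi lo' hi' lo'' hi'' : Fin d → ℝ}

def cellSum (f : (Fin d → ℝ) → ℝ) (S : Finset (Fin d)) (p : Fin d → ℝ) (t : Fin d → ℕ → ℝ)
    (s : Finset (Fin d → ℕ)) : ℝ :=
  ∑ k ∈ s, |quasiVol f S p (fun i => t i (k i)) (fun i => t i (k i + 1))|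

lemma gridSum_eq_cellSum (G : Grid d S lo hi) :
    gridSum f S p lo hi G = cellSum f S p G.t (cells S G.m) := rfl

lemma cellSum_nonneg (t : Fin d → ℕ → ℝ) (s : Finset (Fin d → ℕ)) : 0 ≤ cellSum f S p t s :=
  sum_nonneg fun _ _ => abs_nonneg _

lemma cellSum_add_le (t : Fin d → ℕ → ℝ) (s : Finset (Fin d → ℕ)) :
    cellSum (f + g) S p t s ≤ cellSum f S p t s + cellSum g S p t s := by
  rw [cellSum, cellSum, cellSum, ← sum_add_distrib]
  exact sum_le_sum fun k _ => quasiVol_add (f := f) ▸ abs_add_le _ _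

def Grid.IsPrefix (G : Grid d S lo hi) (K : Grid d S lo' hi') : Prop :=
  ∀ i ∈ S, G.m i ≤ K.m i ∧ ∀ j ≤ G.m i, G.t i j = K.t i j

def Grid.SumLE (G : Grid d S lo hi) (K : Grid d S lo' hi') : Prop :=
  ∀ (f : (Fin d → ℝ) → ℝ) (p : Fin d → ℝ), gridSum f S p lo hi G ≤ gridSum f S p lo' hi' K

lemma Grid.SumLE.trans {G : Grid d S lo hi} {K : Grid d S lo' hi'} {L : Grid d S lo'' hi''}
    (hGK : G.SumLE K) (hKL : K.SumLE L) : G.SumLE L :=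
  fun f p => (hGK f p).trans (hKL f p)

lemma Grid.IsPrefix.gridSum_add_cellSum {G : Grid d S lo hi} {K : Grid d S lo' hi'}
    (h : G.IsPrefix K) (f : (Fin d → ℝ) → ℝ) (p : Fin d → ℝ) :
    gridSum f S p lo hi G + cellSum f S p K.t (cells S K.m \ cells S G.m) =
      gridSum f S p lo' hi' K := by
  have hsub : cells S G.m ⊆ cells S K.m :=
    Fintype.piFinset_subset _ _ fun i => range_subset_range.2 <| by
      split_ifs with hi
      exacts [(h i hi).1, le_rfl]
  rw [gridSum_eq_cellSum, gridSum_eq_cellSum, cellSum, cellSum, cellSum, ← sum_sdiff hsub,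
    add_comm]
  congr 1
  refine sum_congr rfl fun k hk => congr_arg _ (quasiVol_congr ?_ ?_)
  · exact fun i hi => (h i hi).2 _ (lt_of_mem_cells hk hi).le
  · exact fun i hi => (h i hi).2 _ (lt_of_mem_cells hk hi)

lemma Grid.IsPrefix.sumLE {G : Grid d S lo hi} {K : Grid d S lo' hi'} (h : G.IsPrefix K) :
    G.SumLE K := fun f p =>
  (h.gridSum_add_cellSum f p).symm ▸ le_add_of_nonneg_right (cellSum_nonneg _ _)

lemma Grid.IsPrefix.gridSum_add_sub_le {G : Grid d S lo hi} {K : Grid d S lo' hi'}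
    (h : G.IsPrefix K) (f g : (Fin d → ℝ) → ℝ) (p : Fin d → ℝ) :
    gridSum (f + g) S p lo' hi' K - gridSum (f + g) S p lo hi G ≤
      gridSum f S p lo' hi' K - gridSum f S p lo hi G +
        (gridSum g S p lo' hi' K - gridSum g S p lo hi G) := by
  linarith [h.gridSum_add_cellSum (f + g) p, h.gridSum_add_cellSum f p, h.gridSum_add_cellSum g p,
    cellSum_add_le (f := f) (g := g) (S := S) (p := p) K.t (cells S K.m \ cells S G.m)]

end GridSums

structure Subdivision (d : ℕ) (S : Finset (Fin d)) (lo hi : Fin d → ℝ) where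
  m : Fin d → ℕ
  t : Fin d → ℕ → ℝ
  m_pos : ∀ i ∈ S, 0 < m i
  mono : ∀ i ∈ S, Monotone (t i)
  first : ∀ i ∈ S, t i 0 = lo i
  last : ∀ i ∈ S, ∀ j, m i ≤ j → t i j = hi i

namespace Subdivision

variable {S : Finset (Fin d)} {lo hi : Fin d → ℝ} (A B : Subdivision d S lo hi) {i : Fin d}

lemma lo_le (hiS : i ∈ S) (j : ℕ) : lo i ≤ A.t i j :=
  A.first i hiS ▸ A.mono i hiS j.zero_le

lemma le_hi (hiS : i ∈ S) (j : ℕ) : A.t i j ≤ hi i :=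
  A.last i hiS _ (le_max_right j _) ▸ A.mono i hiS (le_max_left j (A.m i))

def toGrid : Grid d S lo hi :=
  ⟨A.m, A.t, fun i hiS _ _ hjk _ => A.mono i hiS hjk, A.first, fun i hiS => A.last i hiS _ le_rfl⟩

def ofGrid (G : Grid d S lo hi) : Subdivision d S lo hi where
  m i := G.m i + 1
  t i j := G.t i (min j (G.m i))
  m_pos _ _ := Nat.succ_pos _
  mono i hiS _ _ hjk := G.mono i hiS _ _ (min_le_min_right _ hjk) (min_le_right _ _)
  first i hiS := by simpa using G.first i hiS
  last i hiS j hj := by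
    rw [min_eq_right (Nat.le_of_succ_le hj)]
    exact G.last i hiS

lemma isPrefix_ofGrid (G : Grid d S lo hi) : G.IsPrefix (ofGrid G).toGrid :=
  fun _ _ => ⟨Nat.le_succ _, fun j hj => by simp [toGrid, ofGrid, min_eq_left hj]⟩

def extend (c : Fin d → ℝ) (hc : ∀ i ∈ S, hi i ≤ c i) : Subdivision d S lo c where
  m i := A.m i + 1
  t i j := if j ≤ A.m i then A.t i j else c i
  m_pos _ _ := Nat.succ_pos _
  mono i hiS j k hjk := by
    by_cases hk : k ≤ A.m i
    · simp only [hk, hjk.trans hk, if_true]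
      exact A.mono i hiS hjk
    · simp only [hk, if_false]
      split_ifs
      exacts [(A.le_hi hiS j).trans (hc i hiS), le_rfl]
  first i hiS := by simpa using A.first i hiS
  last _ _ _ hj := if_neg (by omega)

lemma isPrefix_extend (c : Fin d → ℝ) (hc : ∀ i ∈ S, hi i ≤ c i) :
    A.toGrid.IsPrefix (A.extend c hc).toGrid :=
  fun _ _ => ⟨Nat.le_succ _, fun _ hj => (if_pos hj).symm⟩

def truncate (c : Fin d → ℝ) (hlo : ∀ i ∈ S, lo i ≤ c i) (hc : ∀ i ∈ S, c i ≤ hi i) :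
    Subdivision d S lo c where
  m := A.m
  t i j := min (A.t i j) (c i)
  m_pos := A.m_pos
  mono i hiS _ _ hjk := min_le_min_right _ (A.mono i hiS hjk)
  first i hiS := by rw [A.first i hiS, min_eq_left (hlo i hiS)]
  last i hiS j hj := by rw [A.last i hiS j hj, min_eq_right (hc i hiS)]

lemma projCell_div_mod (hiS : i ∈ S) (κ : ℕ) {r : ℕ} (hr : r ≤ B.m i) :
    projCell (A.t i) ((κ * B.m i + r) / B.m i) (B.t i ((κ * B.m i + r) % B.m i)) =
      projCell (A.t i) κ (B.t i r) := by
  rcases hr.lt_or_eq with hr | rfl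
  · rw [Nat.mul_add_div_of_lt hr, Nat.mul_add_mod_of_lt hr]
  · have hB := B.m_pos i hiS
    rw [← Nat.succ_mul, Nat.mul_div_cancel _ hB, Nat.mul_mod_left, B.first i hiS,
      B.last i hiS _ le_rfl, projCell_of_le (A.mono i hiS κ.succ.le_succ) (A.lo_le hiS _),
      projCell_of_ge (A.mono i hiS κ.le_succ) (A.le_hi hiS _)]

/-- The common refinement: each cell of `A` is subdivided by the points of `B` projected onto it,
index `κ * B.m i + r` carrying the `r`-th point in the `κ`-th cell. -/
def refine : Subdivision d S lo hi where
  m i := A.m i * B.m i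
  t i J := projCell (A.t i) (J / B.m i) (B.t i (J % B.m i))
  m_pos i hiS := Nat.mul_pos (A.m_pos i hiS) (B.m_pos i hiS)
  mono i hiS := by
    refine monotone_nat_of_le_succ fun J => ?_
    obtain ⟨κ, r, hr, rfl⟩ : ∃ κ r, r < B.m i ∧ J = κ * B.m i + r :=
      ⟨J / B.m i, J % B.m i, Nat.mod_lt _ (B.m_pos i hiS), (Nat.div_add_mod' J _).symm⟩
    rw [add_assoc, A.projCell_div_mod B hiS κ hr.le, A.projCell_div_mod B hiS κ hr]
    exact projCell_mono _ _ (B.mono i hiS r.le_succ)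
  first i hiS := by
    simpa [B.first i hiS, A.first i hiS] using
      projCell_of_le (A.mono i hiS (Nat.zero_le 1)) (A.lo_le hiS 0)
  last i hiS j hj := by
    rw [projCell, A.last i hiS _ ((Nat.le_div_iff_mul_le (B.m_pos i hiS)).2 hj)]
    exact max_eq_left ((min_le_left _ _).trans (B.le_hi hiS _))

lemma refine_t (hiS : i ∈ S) (κ : ℕ) {r : ℕ} (hr : r ≤ B.m i) :
    (A.refine B).t i (κ * B.m i + r) = projCell (A.t i) κ (B.t i r) :=
  A.projCell_div_mod B hiS κ hr

lemma gridSum_refine (f : (Fin d → ℝ) → ℝ) (p : Fin d → ℝ) :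
    gridSum f S p lo hi (A.refine B).toGrid =
      ∑ κ ∈ cells S A.m, ∑ r ∈ cells S B.m,
        |quasiVol f S p (fun i => projCell (A.t i) (κ i) (B.t i (r i)))
          (fun i => projCell (A.t i) (κ i) (B.t i (r i + 1)))| := by
  have hcells : cells S (A.refine B).m = Fintype.piFinset fun i =>
      range ((if i ∈ S then A.m i else 1) * (if i ∈ S then B.m i else 1)) := by
    unfold cells
    congr 1
    funext i
    split_ifs <;> rfl
  rw [gridSum_eq_cellSum, cellSum, toGrid, hcells, sum_piFinset_range_mul]
  refine sum_congr rfl fun κ _ => sum_congr rfl fun r hr => congr_arg _ (quasiVol_congr ?_ ?_)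
  · intro i hiS
    simp only [if_pos hiS]
    exact A.refine_t B hiS _ (lt_of_mem_cells hr hiS).le
  · intro i hiS
    simp only [if_pos hiS, add_assoc]
    exact A.refine_t B hiS _ (lt_of_mem_cells hr hiS)

lemma sumLE_refine_left : A.toGrid.SumLE (A.refine B).toGrid := by
  intro f p
  rw [gridSum_refine, gridSum_eq_cellSum, cellSum]
  refine sum_le_sum fun κ _ => ?_
  have htele : ∀ i ∈ S, ∀ g : ℝ → ℝ, ∑ r ∈ range (B.m i),
      (g (projCell (A.t i) (κ i) (B.t i (r + 1))) - g (projCell (A.t i) (κ i) (B.t i r))) =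
        g (A.t i (κ i + 1)) - g (A.t i (κ i)) := by
    intro i hiS g
    have hA := A.mono i hiS (κ i).le_succ
    rw [sum_range_sub (fun r => g (projCell (A.t i) (κ i) (B.t i r))), B.first i hiS,
      B.last i hiS _ le_rfl, projCell_of_le hA (A.lo_le hiS _), projCell_of_ge hA (A.le_hi hiS _)]
  refine (abs_sum_le_sum_abs _ _).trans_eq' ?_
  rw [sum_cells_quasiVol_eq_of_telescoping B.m _ _ _ _ htele p]
  rfl

lemma sumLE_refine_right : B.toGrid.SumLE (A.refine B).toGrid := by
  intro f p
  rw [gridSum_refine, sum_comm, gridSum_eq_cellSum, cellSum]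
  refine sum_le_sum fun r _ => ?_
  have htele : ∀ i ∈ S, ∀ g : ℝ → ℝ, ∑ κ ∈ range (A.m i),
      (g (projCell (A.t i) κ (B.t i (r i + 1))) - g (projCell (A.t i) κ (B.t i (r i)))) =
        g (B.t i (r i + 1)) - g (B.t i (r i)) := by
    intro i hiS g
    have hIcc : ∀ j, B.t i j ∈ Set.Icc (A.t i 0) (A.t i (A.m i)) := fun j => by
      rw [A.first i hiS, A.last i hiS _ le_rfl]
      exact ⟨B.lo_le hiS j, B.le_hi hiS j⟩
    exact sum_range_sub_projCell_sub_projCell (A.mono i hiS) g (hIcc _) (hIcc _)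
  refine (abs_sum_le_sum_abs _ _).trans_eq' ?_
  rw [sum_cells_quasiVol_eq_of_telescoping A.m _ _ _ _ htele p]
  rfl

end Subdivision

section Vitali

variable {f g : (Fin d → ℝ) → ℝ} {S : Finset (Fin d)} {p lo hi a b : Fin d → ℝ}

lemma Grid.nonempty_of_le (h : ∀ i ∈ S, lo i ≤ hi i) : Nonempty (Grid d S lo hi) :=
  ⟨{ m := fun _ => 1
     t := fun i j => if j = 0 then lo i else hi i
     mono := fun i hiS j k _ _ => by split_ifs <;> first | exact le_rfl | exact h i hiS | omega
     first := fun _ _ => if_pos rfl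
     last := fun _ _ => if_neg one_ne_zero }⟩

lemma gridSum_le_vitaliVar (h : BddVitali f S p lo hi) (G : Grid d S lo hi) :
    gridSum f S p lo hi G ≤ vitaliVar f S p lo hi :=
  le_csSup h ⟨G, rfl⟩

lemma vitaliVar_le_of_forall_gridSum_le [Nonempty (Grid d S lo hi)] {M : ℝ}
    (h : ∀ G, gridSum f S p lo hi G ≤ M) : vitaliVar f S p lo hi ≤ M :=
  csSup_le (Set.range_nonempty _) (Set.forall_mem_range.2 h)

lemma BddVitali.add (hf : BddVitali f S p lo hi) (hg : BddVitali g S p lo hi) :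
    BddVitali (f + g) S p lo hi := by
  obtain ⟨Mf, hMf⟩ := hf
  obtain ⟨Mg, hMg⟩ := hg
  exact ⟨Mf + Mg, Set.forall_mem_range.2 fun G =>
    (cellSum_add_le _ _).trans (add_le_add (hMf ⟨G, rfl⟩) (hMg ⟨G, rfl⟩))⟩

lemma BddVitali.of_le (h : BddVitali f S p lo b) (hab : ∀ i ∈ S, a i ≤ b i) :
    BddVitali f S p lo a := by
  obtain ⟨M, hM⟩ := h
  refine ⟨M, Set.forall_mem_range.2 fun G => ?_⟩
  have hG : G.SumLE ((Subdivision.ofGrid G).extend b hab).toGrid :=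
    (Subdivision.isPrefix_ofGrid G).sumLE.trans (Subdivision.isPrefix_extend _ b hab).sumLE
  exact (hG f p).trans (hM ⟨_, rfl⟩)

lemma exists_sumLE_isPrefix (hlo : ∀ i ∈ S, lo i ≤ a i) (hab : ∀ i ∈ S, a i ≤ b i)
    (G : Grid d S lo b) (Gf Gg : Grid d S lo a) :
    ∃ (K : Grid d S lo b) (Ki : Grid d S lo a),
      G.SumLE K ∧ Gf.SumLE Ki ∧ Gg.SumLE Ki ∧ Ki.IsPrefix K := by
  let A := (Subdivision.ofGrid Gf).refine (Subdivision.ofGrid Gg)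
  let B := Subdivision.ofGrid G
  refine ⟨((A.extend b hab).refine B).toGrid, (A.refine (B.truncate a hlo hab)).toGrid,
    (Subdivision.isPrefix_ofGrid G).sumLE.trans (Subdivision.sumLE_refine_right _ _),
    (Subdivision.isPrefix_ofGrid Gf).sumLE.trans
      ((Subdivision.sumLE_refine_left _ _).trans (Subdivision.sumLE_refine_left _ _)),
    (Subdivision.isPrefix_ofGrid Gg).sumLE.trans
      ((Subdivision.sumLE_refine_right _ _).trans (Subdivision.sumLE_refine_left _ _)),
    fun i hiS => ⟨Nat.mul_le_mul_right _ (Nat.le_succ _), fun j hj => ?_⟩⟩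
  obtain ⟨κ, hκ, r, hr, rfl⟩ := Nat.exists_eq_mul_add_of_le_mul (A.m_pos i hiS) hj
  change (A.refine (B.truncate a hlo hab)).t i (κ * (B.truncate a hlo hab).m i + r) =
    ((A.extend b hab).refine B).t i (κ * B.m i + r)
  rw [A.refine_t _ hiS κ hr, (A.extend b hab).refine_t B hiS κ hr]
  simp only [Subdivision.extend, Subdivision.truncate, projCell, if_pos hκ.le,
    if_pos (Nat.succ_le_of_lt hκ)]
  rw [min_assoc, min_eq_right (A.le_hi hiS _)]

lemma vitaliVar_add_sub_le (hf : BddVitali f S p lo b) (hg : BddVitali g S p lo b)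
    (hlo : ∀ i ∈ S, lo i ≤ a i) (hab : ∀ i ∈ S, a i ≤ b i) :
    vitaliVar (f + g) S p lo b - vitaliVar (f + g) S p lo a ≤
      vitaliVar f S p lo b - vitaliVar f S p lo a +
        (vitaliVar g S p lo b - vitaliVar g S p lo a) := by
  have hfga : BddVitali (f + g) S p lo a := (hf.of_le hab).add (hg.of_le hab)
  have := Grid.nonempty_of_le hlo
  have := Grid.nonempty_of_le fun i hiS => (hlo i hiS).trans (hab i hiS)
  set C := vitaliVar f S p lo b + vitaliVar g S p lo b + vitaliVar (f + g) S p lo a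
  have key (G : Grid d S lo b) (Gf Gg : Grid d S lo a) :
      gridSum (f + g) S p lo b G + gridSum f S p lo a Gf + gridSum g S p lo a Gg ≤ C := by
    obtain ⟨K, Ki, hG, hGf, hGg, hpre⟩ := exists_sumLE_isPrefix hlo hab G Gf Gg
    linarith [hG (f + g) p, hGf f p, hGg g p, hpre.gridSum_add_sub_le f g p,
      gridSum_le_vitaliVar hf K, gridSum_le_vitaliVar hg K, gridSum_le_vitaliVar hfga Ki]
  suffices vitaliVar (f + g) S p lo b ≤ C - vitaliVar f S p lo a - vitaliVar g S p lo a by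
    linarith
  refine vitaliVar_le_of_forall_gridSum_le fun G => ?_
  suffices vitaliVar f S p lo a ≤ C - gridSum (f + g) S p lo b G - vitaliVar g S p lo a by
    linarith
  refine vitaliVar_le_of_forall_gridSum_le fun Gf => ?_
  suffices vitaliVar g S p lo a ≤ C - gridSum (f + g) S p lo b G - gridSum f S p lo a Gf by
    linarith
  exact vitaliVar_le_of_forall_gridSum_le fun Gg => by linarith [key G Gf Gg]

end Vitali

/-- Lemma 1 of the paper: a refined triangle-type inequality for the HK-variation
anchored at `0` on nested boxes `[0,a] ⊆ [0,b]`. -/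
theorem stmt8 {d : ℕ} (f g : (Fin d → ℝ) → ℝ) (hf : BddHKVar0 f) (hg : BddHKVar0 g)
    (a b : Fin d → ℝ) (ha : a ∈ Set.Icc (0 : Fin d → ℝ) 1)
    (hb : b ∈ Set.Icc (0 : Fin d → ℝ) 1) (hab : a ≤ b) :
    hkVar0On (f + g) b - hkVar0On (f + g) a ≤
      hkVar0On f b + hkVar0On g b - hkVar0On f a - hkVar0On g a := by
  have hface := sum_le_sum fun S (hS : S ∈ (univ : Finset (Fin d)).powerset.erase ∅) =>
    vitaliVar_add_sub_le ((hf S hS).of_le fun i _ => hb.2 i) ((hg S hS).of_le fun i _ => hb.2 i)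
      (fun i _ => ha.1 i) fun i _ => hab i
  simp only [sum_sub_distrib, sum_add_distrib] at hface
  simp only [hkVar0On, hkVarOn]
  linarith
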